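/- arXiv:2111.14800 — 3 statements merged into one kernel-verified Lean document; each statement's English description precedes it below -/
import Mathlib

section
/- Let W = W(B_n) be the group of signed permutations, i.e., permutations w of {±1,…,±n} with w(-a) = -w(a) for all a. An element w = [a_1,…,a_n] (where a_i = w(i)) has no reduced expression (in the standard Coxeter generators s_0, s_1, …, s_{n-1} of type B_n, with m_{01}=4) containing the substring s_0 s_1 s_0 s_1 or s_1 s_0 s_1 s_0 if and only if there is no pair of indices i < j with a_i > a_j and both a_i < 0 and a_j < 0. -/
/-!
Write `ℓ w` for the number of pairs `(a, b)` with `|a| < b ≤ n` and `w b < w a`. Right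
multiplication by `s_i` changes `ℓ` by `+1` if `w i < w (i + 1)` (with `w 0 = 0`) and by `-1`
otherwise; since only `1` has no descents, `ℓ` is the Coxeter length, and a word is reduced
exactly when each of its letters is an ascent of the prefix before it.

Ascents never destroy a pair `i < j` with `w j < w i < 0`. A reduced block `s_0 s_1 s_0 s_1`
(equal to `s_1 s_0 s_1 s_0` by the braid relation) can follow `z` exactly when `0 < z 1 < z 2`,
and it negates `z 1` and `z 2`, creating such a pair. Conversely, if `w` has such a pair, either
it sits at positions `1, 2` and `w = v s_0 s_1 s_0 s_1` with `ℓ w = ℓ v + 4`, or some descent of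
`w` preserves a pair of this kind; induction on `ℓ w` gives a reduced word containing the block.
-/

/-- The Coxeter generators of the type `B_n` signed permutation group, viewed inside
`Equiv.Perm ℤ`: `s_0` negates `1` (i.e., swaps `1` and `-1`), and for `1 ≤ i ≤ n - 1`,
`s_i` swaps `i, i+1` and simultaneously `-i, -(i+1)`. -/
def genB (n : ℕ) (i : Fin n) : Equiv.Perm ℤ :=
  if i.val = 0 then Equiv.swap 1 (-1)
  else Equiv.swap ((i : ℕ) : ℤ) (((i : ℕ) : ℤ) + 1) *
    Equiv.swap (-((i : ℕ) : ℤ)) (-(((i : ℕ) : ℤ) + 1))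

open Equiv Finset

lemma Finset.card_filter_comp_of_involutive {α : Type*} {s : Finset α} {f : α → α}
    (hf : Function.Involutive f) (hs : ∀ x ∈ s, f x ∈ s) (P : α → Prop) [DecidablePred P] :
    (s.filter fun x => P (f x)).card = (s.filter P).card :=
  card_nbij' f f (fun x hx => by simp_all) (fun x hx => by simp_all [hf x])
    (fun x _ => hf x) (fun x _ => hf x)

lemma Nat.exists_apply_succ_lt_of_apply_lt {α : Type*} [LinearOrder α] {f : ℕ → α}
    {a b : ℕ} (hab : a ≤ b) (h : f b < f a) : ∃ x, a ≤ x ∧ x < b ∧ f (x + 1) < f x := by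
  by_contra! H
  refine (monotoneOn_of_le_succ Set.ordConnected_Icc (fun x _ hx hx' => ?_)
    ⟨le_rfl, hab⟩ ⟨hab, le_rfl⟩ hab).not_gt h
  rw [Order.succ_eq_add_one] at hx' ⊢
  exact H x hx.1 (by simpa using hx'.2)

namespace TypeB

variable {n : ℕ}

lemma genB_apply (i : Fin n) (x : ℤ) :
    genB n i x =
      if (i : ℕ) = 0 then (if x = 1 then -1 else if x = -1 then 1 else x)
      else if x = i then i + 1 else if x = i + 1 then i
      else if x = -i then -(i + 1) else if x = -(i + 1) then -i else x := by
  unfold genB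
  split_ifs <;> simp only [Perm.mul_apply, swap_apply_def] <;> split_ifs <;> omega

lemma genB_involutive (i : Fin n) : Function.Involutive (genB n i) := fun x => by
  simp only [genB_apply]
  grind

lemma genB_mul_self (i : Fin n) : genB n i * genB n i = 1 :=
  Equiv.ext (genB_involutive i)

lemma genB_apply_neg (i : Fin n) (x : ℤ) : genB n i (-x) = -genB n i x := by
  simp only [genB_apply]
  split_ifs <;> omega

structure IsSignedPerm (n : ℕ) (w : Perm ℤ) : Prop where
  map_neg : ∀ a, w (-a) = -w a
  map_of_lt_abs : ∀ a, (n : ℤ) < |a| → w a = a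

namespace IsSignedPerm

variable {v w : Perm ℤ}

lemma one : IsSignedPerm n 1 := ⟨fun _ => rfl, fun _ _ => rfl⟩

lemma mul (hv : IsSignedPerm n v) (hw : IsSignedPerm n w) : IsSignedPerm n (v * w) :=
  ⟨fun a => by simp only [Perm.mul_apply, hw.map_neg, hv.map_neg],
   fun a ha => by simp only [Perm.mul_apply, hw.map_of_lt_abs a ha, hv.map_of_lt_abs a ha]⟩

lemma map_zero (hw : IsSignedPerm n w) : w 0 = 0 := by
  have := hw.map_neg 0
  rw [neg_zero] at this
  omega

lemma abs_apply_le (hw : IsSignedPerm n w) {a : ℤ} (ha : |a| ≤ n) : |w a| ≤ n := by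
  by_contra! h
  have := w.injective (hw.map_of_lt_abs _ h)
  rw [this] at h
  omega

end IsSignedPerm

lemma isSignedPerm_genB (i : Fin n) : IsSignedPerm n (genB n i) := by
  refine ⟨genB_apply_neg i, fun a ha => ?_⟩
  have := i.isLt
  rw [lt_abs] at ha
  rw [genB_apply]
  split_ifs <;> omega

lemma isSignedPerm_prod (l : List (Fin n)) : IsSignedPerm n (l.map (genB n)).prod := by
  induction l with
  | nil => exact .one
  | cons i l ih => simpa using (isSignedPerm_genB i).mul ih

/-- As an inversion, a pair `(a, b)` with `a = 0` records `w b < 0` and one with `a < 0` records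
`w (-a) + w b < 0`, so `lengthB` is the usual inversion number of type `B`. -/
noncomputable def positions (n : ℕ) : Finset (ℤ × ℤ) :=
  (Icc (-n : ℤ) n ×ˢ Icc (-n : ℤ) n).filter fun p => -p.2 < p.1 ∧ p.1 < p.2

noncomputable def inversions (n : ℕ) (w : Perm ℤ) : Finset (ℤ × ℤ) :=
  (positions n).filter fun p => w p.2 < w p.1

noncomputable def lengthB (n : ℕ) (w : Perm ℤ) : ℕ := (inversions n w).card

lemma mem_positions {p : ℤ × ℤ} :
    p ∈ positions n ↔ -p.2 < p.1 ∧ p.1 < p.2 ∧ p.2 ≤ n := by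
  simp only [positions, mem_filter, mem_product, mem_Icc]
  omega

lemma lengthB_one : lengthB n 1 = 0 := by
  rw [lengthB, card_eq_zero, inversions, filter_eq_empty_iff]
  intro p hp
  rw [mem_positions] at hp
  simp only [Perm.one_apply, not_lt]
  omega

lemma lengthB_mul_add_card {g : Perm ℤ} (hg : Function.Involutive g) {S : Finset (ℤ × ℤ)}
    (hS : S ⊆ positions n) (hmaps : ∀ p ∈ positions n \ S, Prod.map g g p ∈ positions n \ S)
    (w : Perm ℤ) :
    lengthB n (w * g) + (S.filter fun p => w p.2 < w p.1).card =
      lengthB n w + (S.filter fun p => (w * g) p.2 < (w * g) p.1).card := by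
  have hsplit (v : Perm ℤ) : lengthB n v =
      ((positions n \ S).filter fun p => v p.2 < v p.1).card +
        (S.filter fun p => v p.2 < v p.1).card := by
    rw [lengthB, inversions, ← card_union_of_disjoint (disjoint_filter_filter sdiff_disjoint),
      ← filter_union, sdiff_union_of_subset hS]
  have hbij : ((positions n \ S).filter fun p => (w * g) p.2 < (w * g) p.1).card =
      ((positions n \ S).filter fun p => w p.2 < w p.1).card :=
    card_filter_comp_of_involutive (hg.prodMap hg) hmaps (fun p => w p.2 < w p.1)
  rw [hsplit, hsplit w, hbij]
  omega

/-- The pairs of `positions n` that `genB n i` maps out of `positions n`. -/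
def movedPairs (i : Fin n) : Finset (ℤ × ℤ) :=
  {(((i : ℕ) : ℤ), ((i : ℕ) : ℤ) + 1), (-((i : ℕ) : ℤ), ((i : ℕ) : ℤ) + 1)}

lemma movedPairs_subset (i : Fin n) : movedPairs i ⊆ positions n := by
  have := i.isLt
  intro p hp
  simp only [movedPairs, mem_insert, mem_singleton] at hp
  rcases hp with rfl | rfl <;> rw [mem_positions] <;> omega

lemma genB_prodMap_mem (i : Fin n) {p : ℤ × ℤ} (hp : p ∈ positions n \ movedPairs i) :
    Prod.map (genB n i) (genB n i) p ∈ positions n \ movedPairs i := by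
  have := i.isLt
  simp only [mem_sdiff, mem_positions, movedPairs, mem_insert, mem_singleton, Prod.map_fst,
    Prod.map_snd, Prod.ext_iff] at hp ⊢
  simp only [genB_apply]
  grind

theorem lengthB_mul_genB {w : Perm ℤ} (hw : IsSignedPerm n w) (i : Fin n) :
    (lengthB n (w * genB n i) : ℤ) =
      lengthB n w + if w (i : ℕ) < w ((i : ℕ) + 1) then 1 else -1 := by
  have key := lengthB_mul_add_card (genB_involutive i) (movedPairs_subset i)
    (fun _ => genB_prodMap_mem i) w
  have hne : w (i : ℕ) ≠ w ((i : ℕ) + 1) := w.injective.ne (by omega)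
  rw [card_filter, card_filter] at key
  rcases eq_or_ne (i : ℕ) 0 with hi | hi
  · have e1 : genB n i 1 = -1 := by rw [genB_apply]; grind
    have e0 : genB n i 0 = 0 := by rw [genB_apply]; grind
    rw [show movedPairs i = {(0, 1)} by simp [movedPairs, hi], sum_singleton, sum_singleton]
      at key
    simp only [Perm.mul_apply, e0, e1, hw.map_neg, hw.map_zero] at key
    simp only [hi, Nat.cast_zero, zero_add, hw.map_zero] at hne ⊢
    split_ifs at key ⊢ <;> omega
  · have e1 : genB n i (i : ℕ) = (i : ℕ) + 1 := by rw [genB_apply]; grind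
    have e2 : genB n i ((i : ℕ) + 1) = (i : ℕ) := by rw [genB_apply]; grind
    have e3 : genB n i (-(i : ℕ)) = -((i : ℕ) + 1) := by rw [genB_apply]; grind
    have hpne :
        (((i : ℕ) : ℤ), ((i : ℕ) : ℤ) + 1) ≠ (-((i : ℕ) : ℤ), ((i : ℕ) : ℤ) + 1) := by
      simp only [ne_eq, Prod.mk.injEq]
      omega
    rw [movedPairs, sum_pair hpne, sum_pair hpne] at key
    simp only [Perm.mul_apply, e1, e2, e3, hw.map_neg] at key
    split_ifs at key ⊢ <;> omega

lemma lengthB_mul_genB_le {w : Perm ℤ} (hw : IsSignedPerm n w) (i : Fin n) :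
    lengthB n (w * genB n i) ≤ lengthB n w + 1 := by
  have := lengthB_mul_genB hw i
  split_ifs at this <;> omega

lemma lengthB_mul_prod_le {w : Perm ℤ} (hw : IsSignedPerm n w) (l : List (Fin n)) :
    lengthB n (w * (l.map (genB n)).prod) ≤ lengthB n w + l.length := by
  induction l generalizing w with
  | nil => simp
  | cons i l ih =>
    have h1 := ih (hw.mul (isSignedPerm_genB i))
    have h2 := lengthB_mul_genB_le hw i
    rw [List.map_cons, List.prod_cons, ← mul_assoc, List.length_cons]
    omega

lemma lengthB_prod_le (l : List (Fin n)) : lengthB n (l.map (genB n)).prod ≤ l.length := by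
  simpa [lengthB_one] using lengthB_mul_prod_le IsSignedPerm.one l

lemma lengthB_prod_eq_of_append {p q : List (Fin n)}
    (h : lengthB n ((p ++ q).map (genB n)).prod = (p ++ q).length) :
    lengthB n (p.map (genB n)).prod = p.length := by
  have h1 := lengthB_mul_prod_le (isSignedPerm_prod p) q
  have h2 := lengthB_prod_le p
  rw [List.map_append, List.prod_append, List.length_append] at h
  omega

lemma lt_of_lengthB_prod_append {p q : List (Fin n)} {i : Fin n}
    (h : lengthB n ((p ++ i :: q).map (genB n)).prod = (p ++ i :: q).length) :
    (p.map (genB n)).prod (i : ℕ) < (p.map (genB n)).prod ((i : ℕ) + 1) := by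
  have hp := lengthB_prod_eq_of_append h
  have hpi := lengthB_prod_eq_of_append (p := p ++ [i]) (q := q) (by simpa using h)
  have := lengthB_mul_genB (isSignedPerm_prod p) i
  rw [List.map_append, List.prod_append, List.map_singleton, List.prod_singleton,
    List.length_append, List.length_singleton] at hpi
  split_ifs at this with hlt
  · exact hlt
  · omega

lemma eq_one_of_forall_lt {w : Perm ℤ} (hw : IsSignedPerm n w)
    (h : ∀ i : Fin n, w (i : ℕ) < w ((i : ℕ) + 1)) : w = 1 := by
  have hmono (i j : ℕ) (hij : i + j ≤ n) : w i + j ≤ w ↑(i + j) := by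
    induction j with
    | zero => simp
    | succ j ih =>
      have h1 : w ((i + j : ℕ) : ℤ) < w ((i + j : ℕ) + 1) := h ⟨i + j, by omega⟩
      have h2 := ih (by omega)
      rw [← Nat.add_assoc, Nat.cast_succ (i + j), Nat.cast_succ j]
      omega
  have hfix (k : ℕ) (hk : k ≤ n) : w k = k := by
    have h1 := hmono 0 k (by omega)
    have h2 := hmono k (n - k) (by omega)
    have h3 := hw.abs_apply_le (a := n) (by simp)
    rw [Nat.add_sub_cancel' hk] at h2
    simp only [Nat.cast_zero, hw.map_zero, zero_add] at h1
    rw [abs_le] at h3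
    omega
  ext a
  rw [Perm.one_apply]
  rcases lt_or_ge (n : ℤ) |a| with ha | ha
  · exact hw.map_of_lt_abs a ha
  · obtain ⟨k, rfl | rfl⟩ := Int.eq_nat_or_neg a
    · exact hfix k (by simpa using ha)
    · rw [hw.map_neg, hfix k (by simpa using ha)]

theorem exists_word_length_eq_lengthB {w : Perm ℤ} (hw : IsSignedPerm n w) :
    ∃ l : List (Fin n), (l.map (genB n)).prod = w ∧ l.length = lengthB n w := by
  induction hN : lengthB n w using Nat.strong_induction_on generalizing w with
  | _ N ih =>
  by_cases hasc : ∀ i : Fin n, w (i : ℕ) < w ((i : ℕ) + 1)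
  · obtain rfl := eq_one_of_forall_lt hw hasc
    exact ⟨[], rfl, by simp [← hN, lengthB_one]⟩
  · obtain ⟨i, hi⟩ := not_forall.1 hasc
    have hlen := lengthB_mul_genB hw i
    rw [if_neg hi] at hlen
    obtain ⟨l, hl, hll⟩ := ih _ (by omega) (hw.mul (isSignedPerm_genB i)) rfl
    exact ⟨l ++ [i], by simp [hl, mul_assoc, genB_mul_self], by simp; omega⟩

theorem lengthB_eq_length_of_minimal {w : Perm ℤ} {l : List (Fin n)}
    (hl : (l.map (genB n)).prod = w)
    (hmin : ∀ l' : List (Fin n), (l'.map (genB n)).prod = w → l.length ≤ l'.length) :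
    lengthB n w = l.length := by
  obtain ⟨l', hl', hlen⟩ := exists_word_length_eq_lengthB (hl ▸ isSignedPerm_prod l)
  have h1 := hmin l' hl'
  have h2 := lengthB_prod_le l
  rw [hl] at h2
  omega

def HasNegInversion (n : ℕ) (w : Perm ℤ) : Prop :=
  ∃ i j : ℤ, 1 ≤ i ∧ i < j ∧ j ≤ (n : ℤ) ∧ w j < w i ∧ w i < 0 ∧ w j < 0

lemma hasNegInversion_mul_genB {w : Perm ℤ} {p q : ℤ} (hp : 1 ≤ p) (hpq : p < q)
    (hqn : q ≤ n) (hqp : w q < w p) (hp0 : w p < 0) (i : Fin n) (h0 : (i : ℕ) = 0 → p ≠ 1)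
    (h1 : p = (i : ℕ) → q ≠ (i : ℕ) + 1) : HasNegInversion n (w * genB n i) := by
  have hpos : 1 ≤ genB n i p ∧ genB n i p < genB n i q ∧ genB n i q ≤ n := by
    have := i.isLt
    simp only [genB_apply]
    grind
  refine ⟨genB n i p, genB n i q, hpos.1, hpos.2.1, hpos.2.2, ?_⟩
  simp only [Perm.mul_apply, genB_involutive i p, genB_involutive i q]
  exact ⟨hqp, hp0, hqp.trans hp0⟩

lemma HasNegInversion.mul_genB_of_lt {w : Perm ℤ} (h : HasNegInversion n w)
    (hw : IsSignedPerm n w) {i : Fin n} (hi : w (i : ℕ) < w ((i : ℕ) + 1)) :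
    HasNegInversion n (w * genB n i) := by
  obtain ⟨p, q, hp, hpq, hqn, hqp, hp0, -⟩ := h
  refine hasNegInversion_mul_genB hp hpq hqn hqp hp0 i (fun hi0 hp1 => ?_) ?_
  · rw [hi0, Nat.cast_zero, zero_add, hw.map_zero, ← hp1] at hi
    exact hi.not_gt hp0
  · rintro rfl rfl
    exact hi.not_gt hqp

lemma HasNegInversion.prod_append {p q : List (Fin n)}
    (h : HasNegInversion n (p.map (genB n)).prod)
    (hl : lengthB n ((p ++ q).map (genB n)).prod = (p ++ q).length) :
    HasNegInversion n ((p ++ q).map (genB n)).prod := by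
  induction q generalizing p with
  | nil => simpa using h
  | cons i q ih =>
    have hi := h.mul_genB_of_lt (isSignedPerm_prod p) (lt_of_lengthB_prod_append hl)
    simpa using ih (p := p ++ [i]) (by simpa using hi) (by simpa using hl)

section Block

variable {i₀ i₁ : Fin n}

lemma genB_braid (h₀ : (i₀ : ℕ) = 0) (h₁ : (i₁ : ℕ) = 1) :
    genB n i₀ * genB n i₁ * genB n i₀ * genB n i₁ =
    genB n i₁ * genB n i₀ * genB n i₁ * genB n i₀ := by
  ext x
  simp only [Perm.mul_apply, genB_apply, h₀, h₁]
  grind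

lemma lengthB_mul_block_iff (h₀ : (i₀ : ℕ) = 0) (h₁ : (i₁ : ℕ) = 1) {z : Perm ℤ}
    (hz : IsSignedPerm n z) :
    lengthB n (z * genB n i₀ * genB n i₁ * genB n i₀ * genB n i₁) = lengthB n z + 4 ↔
      0 < z 1 ∧ z 1 < z 2 := by
  have hz₁ := hz.mul (isSignedPerm_genB i₀)
  have hz₂ := hz₁.mul (isSignedPerm_genB i₁)
  have hz₃ := hz₂.mul (isSignedPerm_genB i₀)
  have l₁ := lengthB_mul_genB hz i₀
  have l₂ := lengthB_mul_genB hz₁ i₁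
  have l₃ := lengthB_mul_genB hz₂ i₀
  have l₄ := lengthB_mul_genB hz₃ i₁
  simp only [Perm.mul_apply, genB_apply, h₀, h₁] at l₁ l₂ l₃ l₄
  norm_num [hz.map_neg, hz.map_zero] at l₁ l₂ l₃ l₄
  split_ifs at l₁ l₂ l₃ l₄ <;> omega

lemma hasNegInversion_mul_block (h₀ : (i₀ : ℕ) = 0) (h₁ : (i₁ : ℕ) = 1) {z : Perm ℤ}
    (hz : IsSignedPerm n z) (hz₁ : 0 < z 1) (hz₁₂ : z 1 < z 2) :
    HasNegInversion n (z * genB n i₀ * genB n i₁ * genB n i₀ * genB n i₁) := by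
  have hn : 2 ≤ (n : ℤ) := by have := i₁.isLt; omega
  refine ⟨1, 2, le_rfl, one_lt_two, hn, ?_⟩
  simp only [Perm.mul_apply, genB_apply, h₀, h₁]
  norm_num [hz.map_neg]
  omega

lemma hasNegInversion_of_reduced_block (h₀ : (i₀ : ℕ) = 0) (h₁ : (i₁ : ℕ) = 1)
    {l₁ l₂ : List (Fin n)}
    (hl : lengthB n ((l₁ ++ [i₀, i₁, i₀, i₁] ++ l₂).map (genB n)).prod =
      (l₁ ++ [i₀, i₁, i₀, i₁] ++ l₂).length) :
    HasNegInversion n ((l₁ ++ [i₀, i₁, i₀, i₁] ++ l₂).map (genB n)).prod := by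
  have hz := isSignedPerm_prod l₁
  have hblock : ((l₁ ++ [i₀, i₁, i₀, i₁]).map (genB n)).prod =
      (l₁.map (genB n)).prod * genB n i₀ * genB n i₁ * genB n i₀ * genB n i₁ := by
    simp [mul_assoc]
  have hpre := lengthB_prod_eq_of_append hl
  have hz₀ := lengthB_prod_eq_of_append hpre
  obtain ⟨hz₁, hz₁₂⟩ := (lengthB_mul_block_iff h₀ h₁ hz).1 (by
    rw [← hblock, hpre, hz₀]
    simp)
  refine HasNegInversion.prod_append ?_ hl
  rw [hblock]
  exact hasNegInversion_mul_block h₀ h₁ hz hz₁ hz₁₂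

lemma exists_reduced_word_ending_block (h₀ : (i₀ : ℕ) = 0) (h₁ : (i₁ : ℕ) = 1)
    {w : Perm ℤ} (hw : IsSignedPerm n w) (hw₁ : w 1 < 0) (hw₂₁ : w 2 < w 1) :
    ∃ l : List (Fin n), (l.map (genB n)).prod = w ∧ l.length = lengthB n w ∧
      [0, 1, 0, 1] <:+: l.map Fin.val := by
  set v := w * genB n i₁ * genB n i₀ * genB n i₁ * genB n i₀
  have hv : IsSignedPerm n v := (((hw.mul (isSignedPerm_genB i₁)).mul
    (isSignedPerm_genB i₀)).mul (isSignedPerm_genB i₁)).mul (isSignedPerm_genB i₀)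
  have hvw : v * genB n i₀ * genB n i₁ * genB n i₀ * genB n i₁ = w := by
    ext x
    simp only [v, Perm.mul_apply, genB_involutive _ _]
  have hv₁ : v 1 = -w 1 := by
    simp only [v, Perm.mul_apply, genB_apply, h₀, h₁]
    norm_num [hw.map_neg]
  have hv₂ : v 2 = -w 2 := by
    simp only [v, Perm.mul_apply, genB_apply, h₀, h₁]
    norm_num [hw.map_neg]
  have hlen := (lengthB_mul_block_iff h₀ h₁ hv).2 ⟨by omega, by omega⟩
  obtain ⟨l, hl, hll⟩ := exists_word_length_eq_lengthB hv
  refine ⟨l ++ [i₀, i₁, i₀, i₁], ?_, ?_, ?_⟩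
  · rw [List.map_append, List.prod_append, hl]
    simpa [mul_assoc] using hvw
  · rw [hvw] at hlen
    simp only [List.length_append, List.length_cons, List.length_nil]
    omega
  · simpa [h₀, h₁] using List.infix_append (l.map Fin.val) [0, 1, 0, 1] []

end Block

theorem hasNegInversion_of_reduced_of_infix {l : List (Fin n)}
    (hl : lengthB n (l.map (genB n)).prod = l.length)
    (h : [0, 1, 0, 1] <:+: l.map Fin.val ∨ [1, 0, 1, 0] <:+: l.map Fin.val) :
    HasNegInversion n (l.map (genB n)).prod := by
  obtain ⟨m, ⟨l₁, l₂, rfl⟩, hm⟩ : ∃ m, m <:+: l ∧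
      (m.map Fin.val = [0, 1, 0, 1] ∨ m.map Fin.val = [1, 0, 1, 0]) := by
    rcases h with h | h <;> obtain ⟨m, hm, e⟩ := List.infix_map_iff.1 h
    exacts [⟨m, hm, .inl e.symm⟩, ⟨m, hm, .inr e.symm⟩]
  obtain ⟨a, b, c, d, rfl⟩ := List.length_eq_four.1 <| by
    rcases hm with h | h <;> simpa using congrArg List.length h
  simp only [List.map_cons, List.map_nil, List.cons.injEq, and_true] at hm
  obtain rfl : a = c := Fin.ext (by omega)
  obtain rfl : b = d := Fin.ext (by omega)
  rcases hm with ⟨ha, hb, -⟩ | ⟨ha, hb, -⟩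
  · exact hasNegInversion_of_reduced_block ha hb hl
  · have hbraid : ((l₁ ++ [b, a, b, a] ++ l₂).map (genB n)).prod =
        ((l₁ ++ [a, b, a, b] ++ l₂).map (genB n)).prod := by
      simp only [List.map_append, List.prod_append]
      congr 2
      simpa [mul_assoc] using genB_braid hb ha
    rw [← hbraid] at hl ⊢
    exact hasNegInversion_of_reduced_block hb ha (by simpa using hl)

lemma exists_descent_preserving {w : Perm ℤ} (hw : IsSignedPerm n w) {p q : ℤ} (hp : 1 ≤ p)
    (hpq : p < q) (hqn : q ≤ n) (hqp : w q < w p) (hp0 : w p < 0) (h₁₂ : ¬(p = 1 ∧ q = 2)) :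
    ∃ i : Fin n, w ((i : ℕ) + 1) < w (i : ℕ) ∧ ((i : ℕ) = 0 → p ≠ 1) ∧
      (p = (i : ℕ) → q ≠ (i : ℕ) + 1) := by
  lift p to ℕ using (by omega)
  lift q to ℕ using (by omega)
  -- Look below `p` if `2 ≤ p` (as `w 0 = 0 > w p`), and in `[p, q)` otherwise (then `q ≥ 3`).
  obtain ⟨x, hx0, hx1, hxn, hdesc⟩ : ∃ x : ℕ, (x = 0 → p ≠ 1) ∧ (p = x → q ≠ x + 1) ∧
      x < n ∧ w ((x : ℤ) + 1) < w x := by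
    rcases le_or_gt 2 p with hp2 | hp2
    · obtain ⟨x, -, hxp, hx⟩ := Nat.exists_apply_succ_lt_of_apply_lt (f := fun k : ℕ => w k)
        (Nat.zero_le p) (by simpa [hw.map_zero] using hp0)
      exact ⟨x, by omega, by omega, by omega, by simpa using hx⟩
    · obtain ⟨x, hpx, hxq, hx⟩ :=
        Nat.exists_apply_succ_lt_of_apply_lt (f := fun k : ℕ => w k) (by omega) hqp
      exact ⟨x, by omega, by omega, by omega, by simpa using hx⟩
  exact ⟨⟨x, hxn⟩, hdesc, by exact_mod_cast hx0, by exact_mod_cast hx1⟩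

theorem exists_reduced_word_infix_block {w : Perm ℤ} (hw : IsSignedPerm n w)
    (h : HasNegInversion n w) :
    ∃ l : List (Fin n), (l.map (genB n)).prod = w ∧ l.length = lengthB n w ∧
      [0, 1, 0, 1] <:+: l.map Fin.val := by
  induction hN : lengthB n w using Nat.strong_induction_on generalizing w with
  | _ N ih =>
  obtain ⟨p, q, hp, hpq, hqn, hqp, hp0, -⟩ := h
  by_cases hbase : p = 1 ∧ q = 2
  · obtain ⟨rfl, rfl⟩ := hbase
    have hn : 1 < n := by omega
    exact hN ▸
      exists_reduced_word_ending_block (i₀ := ⟨0, by omega⟩) (i₁ := ⟨1, hn⟩) rfl rfl hw hp0 hqp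
  obtain ⟨i, hdesc, h0, h1⟩ := exists_descent_preserving hw hp hpq hqn hqp hp0 hbase
  have hlen := lengthB_mul_genB hw i
  rw [if_neg hdesc.not_gt] at hlen
  obtain ⟨l, hl, hll, hblock⟩ := ih _ (by omega) (hw.mul (isSignedPerm_genB i))
    (hasNegInversion_mul_genB hp hpq hqn hqp hp0 i h0 h1) rfl
  refine ⟨l ++ [i], by simp [hl, mul_assoc, genB_mul_self], by simp; omega, ?_⟩
  rw [List.map_append]
  exact hblock.trans (List.infix_append [] _ _)

end TypeB

open TypeB

theorem stmt_0_general (n : ℕ) (w : Equiv.Perm ℤ)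
    (hsgn : ∀ a : ℤ, w (-a) = -w a)
    (hfix : ∀ a : ℤ, (n : ℤ) < |a| → w a = a) :
    (∀ l : List (Fin n), (l.map (genB n)).prod = w →
      (∀ l' : List (Fin n), (l'.map (genB n)).prod = w → l.length ≤ l'.length) →
      ¬ ([0, 1, 0, 1] <:+: l.map Fin.val ∨ [1, 0, 1, 0] <:+: l.map Fin.val))
    ↔ ¬ ∃ i j : ℤ, 1 ≤ i ∧ i < j ∧ j ≤ (n : ℤ) ∧ w j < w i ∧ w i < 0 ∧ w j < 0 := by
  have hw : IsSignedPerm n w := ⟨hsgn, hfix⟩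
  constructor
  · rintro hred hneg
    obtain ⟨l, hl, hlen, hblock⟩ := exists_reduced_word_infix_block hw hneg
    exact hred l hl (fun l' hl' => hlen ▸ hl' ▸ lengthB_prod_le l') (.inl hblock)
  · rintro hneg l hl hmin hinfix
    have hlen := lengthB_eq_length_of_minimal hl hmin
    exact hneg (hl ▸ hasNegInversion_of_reduced_of_infix (hl ▸ hlen) hinfix)

/-- Let `w` be a signed permutation of `{±1, …, ±n}` (a permutation of `ℤ` with
`w(-a) = -w(a)`, fixing everything of absolute value `> n`). Then no reduced expression
for `w` in the generators `s_0, s_1, …, s_{n-1}` of type `B_n` contains the substring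
`s_0 s_1 s_0 s_1` or `s_1 s_0 s_1 s_0`, if and only if there is no pair of indices
`1 ≤ i < j ≤ n` with `w(i) > w(j)` and both `w(i) < 0` and `w(j) < 0`. -/
theorem stmt_0 (n : ℕ) (hn : 2 ≤ n) (w : Equiv.Perm ℤ)
    (hsgn : ∀ a : ℤ, w (-a) = -w a)
    (hfix : ∀ a : ℤ, (n : ℤ) < |a| → w a = a)
    (hgen : ∃ l : List (Fin n), (l.map (genB n)).prod = w) :
    (∀ l : List (Fin n), (l.map (genB n)).prod = w →
      (∀ l' : List (Fin n), (l'.map (genB n)).prod = w → l.length ≤ l'.length) →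
      ¬ ([0, 1, 0, 1] <:+: l.map Fin.val ∨ [1, 0, 1, 0] <:+: l.map Fin.val))
    ↔ ¬ ∃ i j : ℤ, 1 ≤ i ∧ i < j ∧ j ≤ (n : ℤ) ∧ w j < w i ∧ w i < 0 ∧ w j < 0 :=
  stmt_0_general n w hsgn hfix
end

section
/- The number of signed permutations w = [a_1,…,a_n] of {±1,…,±n} (with w(-a) = -w(a)) that contain no pair of indices i < j with a_i > a_j and a_i, a_j both negative, equals ∑_{k=0}^{n} (C(n,k))^2 · k!, where C(n,k) is the binomial coefficient. -/
open Finset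

def signedVal {n : ℕ} (p : Equiv.Perm (Fin n) × (Fin n → Bool)) (i : Fin n) : ℤ :=
  if p.2 i then -((p.1 i : ℤ) + 1) else (p.1 i : ℤ) + 1

namespace SignedAux

variable {n : ℕ}

def Good (p : Equiv.Perm (Fin n) × (Fin n → Bool)) : Prop :=
  ¬ ∃ i j : Fin n, i < j ∧ signedVal p i < 0 ∧ signedVal p j < 0 ∧
    signedVal p j < signedVal p i

lemma signedVal_neg_iff (p : Equiv.Perm (Fin n) × (Fin n → Bool)) (i : Fin n) :
    signedVal p i < 0 ↔ p.2 i = true := by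
  unfold signedVal
  rcases h : p.2 i with _ | _ <;> simp [h]
  · positivity
  · have : (0:ℤ) ≤ (p.1 i : ℤ) := Int.natCast_nonneg _
    omega

lemma good_iff (p : Equiv.Perm (Fin n) × (Fin n → Bool)) :
    Good p ↔ ∀ i j : Fin n, i < j → p.2 i = true → p.2 j = true → p.1 j < p.1 i := by
  constructor
  · intro hg i j hij hi hj
    have h1 : signedVal p i < 0 := (signedVal_neg_iff p i).2 hi
    have h2 : signedVal p j < 0 := (signedVal_neg_iff p j).2 hj
    have hne : p.1 j ≠ p.1 i := fun h => (hij.ne' (p.1.injective h)).elim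
    rcases lt_or_ge (p.1 j) (p.1 i) with h | h
    · exact h
    · exfalso
      apply hg
      refine ⟨i, j, hij, h1, h2, ?_⟩
      unfold signedVal
      simp only [hi, hj, if_true]
      have : (p.1 i : ℤ) < (p.1 j : ℤ) := by
        exact_mod_cast lt_of_le_of_ne h (Ne.symm hne)
      omega
  · rintro h ⟨i, j, hij, h1, h2, hlt⟩
    have hi := (signedVal_neg_iff p i).1 h1
    have hj := (signedVal_neg_iff p j).1 h2
    have := h i j hij hi hj
    unfold signedVal at hlt
    simp only [hi, hj, if_true] at hlt
    have : (p.1 j : ℤ) < (p.1 i : ℤ) := by exact_mod_cast this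
    omega

/-- The image of a partial injection. -/
def img (D : Finset (Fin n)) (f : ↥D ↪ Fin n) : Finset (Fin n) := Finset.univ.map f

lemma card_img (D : Finset (Fin n)) (f : ↥D ↪ Fin n) : (img D f).card = D.card := by
  rw [img, card_map, card_univ, Fintype.card_coe]

lemma card_compl_img (D : Finset (Fin n)) (f : ↥D ↪ Fin n) : (img D f)ᶜ.card = Dᶜ.card := by
  rw [card_compl, card_compl, card_img]

lemma mem_img (D : Finset (Fin n)) (f : ↥D ↪ Fin n) (d : ↥D) : f d ∈ img D f :=
  mem_map_of_mem f (mem_univ d)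

/-- The underlying function of the permutation built from a partial injection: `f` on `D`,
and the unique decreasing bijection `Dᶜ → (img D f)ᶜ` elsewhere. -/
def buildFun (D : Finset (Fin n)) (f : ↥D ↪ Fin n) : Fin n → Fin n := fun i =>
  if h : i ∈ D then f ⟨i, h⟩
  else (img D f)ᶜ.orderEmbOfFin (card_compl_img D f)
    (((Dᶜ.orderIsoOfFin rfl).symm ⟨i, Finset.mem_compl.2 h⟩ : Fin Dᶜ.card).rev)

lemma buildFun_of_mem (D : Finset (Fin n)) (f : ↥D ↪ Fin n) {i : Fin n} (h : i ∈ D) :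
    buildFun D f i = f ⟨i, h⟩ := dif_pos h

lemma buildFun_mem_img (D : Finset (Fin n)) (f : ↥D ↪ Fin n) {i : Fin n} (h : i ∈ D) :
    buildFun D f i ∈ img D f := by
  rw [buildFun_of_mem D f h]; exact mem_img D f _

lemma buildFun_mem_compl (D : Finset (Fin n)) (f : ↥D ↪ Fin n) {i : Fin n} (h : i ∉ D) :
    buildFun D f i ∈ (img D f)ᶜ := by
  rw [buildFun, dif_neg h]
  exact orderEmbOfFin_mem _ _ _

lemma buildFun_anti (D : Finset (Fin n)) (f : ↥D ↪ Fin n) {i j : Fin n}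
    (hi : i ∉ D) (hj : j ∉ D) (hij : i < j) : buildFun D f j < buildFun D f i := by
  unfold buildFun
  rw [dif_neg hi, dif_neg hj]
  apply (OrderEmbedding.lt_iff_lt _).2
  apply Fin.rev_lt_rev.2
  exact (OrderIso.lt_iff_lt _).2 (by exact hij)

lemma buildFun_injective (D : Finset (Fin n)) (f : ↥D ↪ Fin n) :
    Function.Injective (buildFun D f) := by
  intro i j hEq
  by_cases hi : i ∈ D <;> by_cases hj : j ∈ D
  · rw [buildFun_of_mem D f hi, buildFun_of_mem D f hj] at hEq
    exact congrArg Subtype.val (f.injective hEq)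
  · exact absurd (hEq ▸ buildFun_mem_img D f hi) (Finset.mem_compl.1 (buildFun_mem_compl D f hj))
  · exact absurd (hEq ▸ buildFun_mem_img D f hj) (Finset.mem_compl.1 (buildFun_mem_compl D f hi))
  · rcases lt_trichotomy i j with h | h | h
    · exact absurd hEq (buildFun_anti D f hi hj h).ne'
    · exact h
    · exact absurd hEq (buildFun_anti D f hj hi h).ne

/-- The permutation built from a partial injection. -/
noncomputable def buildPerm (D : Finset (Fin n)) (f : ↥D ↪ Fin n) : Equiv.Perm (Fin n) :=
  Equiv.ofBijective (buildFun D f) (Finite.injective_iff_bijective.1 (buildFun_injective D f))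

@[simp] lemma buildPerm_apply (D : Finset (Fin n)) (f : ↥D ↪ Fin n) (i : Fin n) :
    buildPerm D f i = buildFun D f i := rfl

/-- Uniqueness of decreasing maps between two finsets of the same cardinality. -/
lemma anti_unique {A B : Finset (Fin n)} (hAB : B.card = A.card)
    {g₁ g₂ : Fin n → Fin n} (m₁ : ∀ i ∈ A, g₁ i ∈ B) (m₂ : ∀ i ∈ A, g₂ i ∈ B)
    (a₁ : ∀ i ∈ A, ∀ j ∈ A, i < j → g₁ j < g₁ i)
    (a₂ : ∀ i ∈ A, ∀ j ∈ A, i < j → g₂ j < g₂ i) :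
    ∀ i ∈ A, g₁ i = g₂ i := by
  have key : ∀ (g : Fin n → Fin n), (∀ i ∈ A, g i ∈ B) →
      (∀ i ∈ A, ∀ j ∈ A, i < j → g j < g i) →
      (fun x : Fin A.card => g (A.orderEmbOfFin rfl x.rev)) = B.orderEmbOfFin hAB := by
    intro g hm ha
    apply orderEmbOfFin_unique
    · intro x; exact hm _ (orderEmbOfFin_mem _ _ _)
    · intro x y hxy
      exact ha _ (orderEmbOfFin_mem _ _ _) _ (orderEmbOfFin_mem _ _ _)
        ((A.orderEmbOfFin rfl).strictMono (Fin.rev_lt_rev.2 hxy))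
  intro i hi
  obtain ⟨x, hx⟩ : ∃ x : Fin A.card, A.orderEmbOfFin rfl x = i := by
    have : i ∈ Set.range (A.orderEmbOfFin rfl) := by
      rw [range_orderEmbOfFin]; exact hi
    exact this
  have h1 := congrFun (key g₁ m₁ a₁) x.rev
  have h2 := congrFun (key g₂ m₂ a₂) x.rev
  simp only [Fin.rev_rev, hx] at h1 h2
  rw [h1, h2]

lemma sigma_ext {D D' : Finset (Fin n)} {f : ↥D ↪ Fin n} {f' : ↥D' ↪ Fin n} (h : D' = D)
    (hf : ∀ i (hi' : i ∈ D') (hi : i ∈ D), f' ⟨i, hi'⟩ = f ⟨i, hi⟩) :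
    (⟨D', f'⟩ : Σ E : Finset (Fin n), ↥E ↪ Fin n) = ⟨D, f⟩ := by
  subst h
  congr 1
  ext ⟨i, hi⟩
  exact congrArg _ (hf i hi hi)

/-- The central bijection: `bad-pair`-avoiding signed permutations correspond to partial
injections on `Fin n` (the restriction to the positions of the positive entries). -/
noncomputable def E : {p : Equiv.Perm (Fin n) × (Fin n → Bool) // Good p} ≃
    Σ D : Finset (Fin n), (↥D ↪ Fin n) where
  toFun p := ⟨Finset.univ.filter (fun i => p.1.2 i = false),
    ⟨fun d => p.1.1 d.1, fun a b hab => Subtype.ext (p.1.1.injective hab)⟩⟩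
  invFun q := ⟨(buildPerm q.1 q.2, fun i => decide (i ∉ q.1)), by
    rw [good_iff]
    intro i j hij hi hj
    simp only [decide_eq_true_iff] at hi hj
    exact buildFun_anti q.1 q.2 hi hj hij⟩
  left_inv := by
    rintro ⟨⟨σ, ε⟩, hg⟩
    set D : Finset (Fin n) := Finset.univ.filter (fun i => ε i = false) with hD
    set f : ↥D ↪ Fin n := ⟨fun d => σ d.1, fun a b hab => Subtype.ext (σ.injective hab)⟩ with hf
    apply Subtype.ext
    have hmemD : ∀ i : Fin n, i ∈ D ↔ ε i = false := by
      intro i; simp [hD]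
    apply Prod.ext
    · -- permutations agree
      show buildPerm D f = σ
      apply Equiv.ext
      intro i
      by_cases h : i ∈ D
      · rw [buildPerm_apply, buildFun_of_mem D f h]; rfl
      · -- use uniqueness of decreasing maps
        have hσmem : ∀ j ∈ Dᶜ, σ j ∈ (img D f)ᶜ := by
          intro j hj
          rw [Finset.mem_compl]
          intro hc
          obtain ⟨d, _, hd⟩ := Finset.mem_map.1 hc
          have : d.1 = j := σ.injective hd
          exact (Finset.mem_compl.1 hj) (this ▸ d.2)
        have hσanti : ∀ i ∈ Dᶜ, ∀ j ∈ Dᶜ, i < j → σ j < σ i := by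
          intro a ha b hb hab
          have ha' : ε a = true := by
            have := Finset.mem_compl.1 ha
            rw [hmemD] at this
            simpa using this
          have hb' : ε b = true := by
            have := Finset.mem_compl.1 hb
            rw [hmemD] at this
            simpa using this
          exact (good_iff (σ, ε)).1 hg a b hab ha' hb'
        have hbmem : ∀ j ∈ Dᶜ, buildFun D f j ∈ (img D f)ᶜ := fun j hj =>
          buildFun_mem_compl D f (Finset.mem_compl.1 hj)
        have hbanti : ∀ a ∈ Dᶜ, ∀ b ∈ Dᶜ, a < b → buildFun D f b < buildFun D f a :=
          fun a ha b hb hab =>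
            buildFun_anti D f (Finset.mem_compl.1 ha) (Finset.mem_compl.1 hb) hab
        exact anti_unique (card_compl_img D f) hbmem hσmem hbanti hσanti i
          (Finset.mem_compl.2 h)
    · -- sign vectors agree
      show (fun i => decide (i ∉ D)) = ε
      funext i
      rcases hε : ε i with _ | _
      · simp [hmemD, hε]
      · simp [hmemD, hε]
  right_inv := by
    rintro ⟨D, f⟩
    apply sigma_ext
    · ext i
      simp
    · intro i hi' hi
      exact buildFun_of_mem D f hi

end SignedAux

/-- The number of signed permutations `w = [a_1, …, a_n]` of `{±1, …, ±n}` containing no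
pair of indices `i < j` with `a_i > a_j` and `a_i, a_j` both negative equals
`∑_{k=0}^{n} (C(n,k))² · k!`. -/
theorem stmt_1 (n : ℕ) :
    ((Finset.univ : Finset (Equiv.Perm (Fin n) × (Fin n → Bool))).filter
        (fun p => ¬ ∃ i j : Fin n, i < j ∧ signedVal p i < 0 ∧ signedVal p j < 0 ∧
          signedVal p j < signedVal p i)).card
      = ∑ m ∈ Finset.range (n + 1), (n.choose m) ^ 2 * m.factorial := by
  classical
  have h1 : ((Finset.univ : Finset (Equiv.Perm (Fin n) × (Fin n → Bool))).filter
        (fun p => ¬ ∃ i j : Fin n, i < j ∧ signedVal p i < 0 ∧ signedVal p j < 0 ∧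
          signedVal p j < signedVal p i)).card
      = Fintype.card {p : Equiv.Perm (Fin n) × (Fin n → Bool) // SignedAux.Good p} := by
    rw [Fintype.card_subtype]
    congr 1
    ext p
    simp [SignedAux.Good, Finset.mem_filter]
  rw [h1, Fintype.card_congr SignedAux.E, Fintype.card_sigma]
  have h2 : ∀ D : Finset (Fin n), Fintype.card (↥D ↪ Fin n) = n.descFactorial D.card := by
    intro D
    rw [Fintype.card_embedding_eq, Fintype.card_fin, Fintype.card_coe]
  simp only [h2]
  rw [← Finset.powerset_univ, Finset.sum_powerset_apply_card (fun m => n.descFactorial m)]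
  rw [Finset.card_univ, Fintype.card_fin]
  apply Finset.sum_congr rfl
  intro m _
  rw [smul_eq_mul, Nat.descFactorial_eq_factorial_mul_choose]
  ring
end

section
/- For n ≥ 1 and d ≥ 2, the generalized nil-Coxeter algebra NC_A(n,d) of type A_n with d = (d, 2, …, 2) — generated by x_1,…,x_n with x_1^d = 0, x_i^2 = 0 for i ≥ 2, x_i x_j = x_j x_i for |i-j| > 1, and x_i x_{i+1} x_i = x_{i+1} x_i x_{i+1} for all i — is a free k-module of rank n!·(1 + n(d-1)). -/
/-- The defining relations of the generalized nil-Coxeter algebra `NC_A(n, d)` of type `A_n`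
with exponent vector `(d, 2, …, 2)`: `x₁^d = 0`, `x_i² = 0` for `i ≥ 2`,
`x_i x_j = x_j x_i` for `|i - j| > 1`, and `x_i x_{i+1} x_i = x_{i+1} x_i x_{i+1}`. -/
inductive NCARel (k : Type*) [CommRing k] (n d : ℕ) :
    FreeAlgebra k (Fin n) → FreeAlgebra k (Fin n) → Prop
  | pow_first (i : Fin n) (h : i.val = 0) : NCARel k n d (FreeAlgebra.ι k i ^ d) 0
  | sq (i : Fin n) (h : 0 < i.val) : NCARel k n d (FreeAlgebra.ι k i ^ 2) 0
  | comm (i j : Fin n) (h : i.val + 1 < j.val) :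
      NCARel k n d (FreeAlgebra.ι k i * FreeAlgebra.ι k j)
        (FreeAlgebra.ι k j * FreeAlgebra.ι k i)
  | braid (i j : Fin n) (h : j.val = i.val + 1) :
      NCARel k n d (FreeAlgebra.ι k i * FreeAlgebra.ι k j * FreeAlgebra.ι k i)
        (FreeAlgebra.ι k j * FreeAlgebra.ι k i * FreeAlgebra.ι k j)

/-!
Index generators from `0`. Let `A = NC_A(n + 1, d + 2)`, generated by `x_0, …, x_n` with
`x_0^(d+2) = 0`, and `B = NC_A(n, 2)`, mapped into `A` by `x_i ↦ x_{i+1}`. Then `A` is a free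
right `B`-module on the `1 + (n + 1)(d + 1)` words `1` and `x_κ ⋯ x_1 x_0^(α+1)`
(`κ ≤ n`, `α ≤ d`), which gives the rank by induction on `n`, starting from `NC_A(0, d) = k`.
To see this, let `x_g` act on the free `B`-module on these words by the rule that rewrites
`x_g w b` in the form `w' b'`. The defining relations of `A` hold for these operators (a finite
case check), so `A` acts, and `a ↦ a • [1]` is inverse to `[w] b ↦ w b`.
-/

abbrev GenNilCoxeter (k : Type*) [CommRing k] (n d : ℕ) := RingQuot (NCARel k n d)

namespace GenNilCoxeter

variable {k : Type*} [CommRing k] {n d : ℕ}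

/-- The generator `x_m` (the statement's `x_{m+1}`), and `0` for `m ≥ n`, which lets most
relations hold without range conditions. -/
noncomputable def gen (m : ℕ) : GenNilCoxeter k n d :=
  if h : m < n then RingQuot.mkAlgHom k (NCARel k n d) (FreeAlgebra.ι k ⟨m, h⟩) else 0

theorem mkAlgHom_ι (i : Fin n) :
    RingQuot.mkAlgHom k (NCARel k n d) (FreeAlgebra.ι k i) = gen i.val := by
  simp [gen]

theorem gen_of_le {m : ℕ} (h : n ≤ m) : (gen m : GenNilCoxeter k n d) = 0 :=
  dif_neg (by omega)

theorem gen_zero_pow (h : 0 < n) : (gen 0 : GenNilCoxeter k n d) ^ d = 0 := by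
  simpa [map_pow, mkAlgHom_ι] using
    RingQuot.mkAlgHom_rel k (NCARel.pow_first (k := k) (d := d) ⟨0, h⟩ rfl)

theorem gen_mul_self {m : ℕ} (hm : 0 < m) : (gen m : GenNilCoxeter k n d) * gen m = 0 := by
  rcases lt_or_ge m n with h | h
  · simpa [map_pow, mkAlgHom_ι, sq] using
      RingQuot.mkAlgHom_rel k (NCARel.sq (k := k) (d := d) ⟨m, h⟩ hm)
  · simp [gen_of_le h]

theorem gen_mul_self_of_two (m : ℕ) : (gen m : GenNilCoxeter k n 2) * gen m = 0 := by
  rcases m.eq_zero_or_pos with rfl | hm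
  · rcases n.eq_zero_or_pos with rfl | hn
    · simp [gen_of_le]
    · simpa [sq] using gen_zero_pow (k := k) (d := 2) hn
  · exact gen_mul_self hm

theorem gen_mul_comm {i j : ℕ} (hij : i + 1 < j) :
    (gen i : GenNilCoxeter k n d) * gen j = gen j * gen i := by
  rcases lt_or_ge j n with h | h
  · simpa [map_mul, mkAlgHom_ι] using
      RingQuot.mkAlgHom_rel k (NCARel.comm (k := k) (d := d) ⟨i, by omega⟩ ⟨j, h⟩ hij)
  · simp [gen_of_le h]

theorem gen_braid (i : ℕ) :
    (gen i : GenNilCoxeter k n d) * gen (i + 1) * gen i = gen (i + 1) * gen i * gen (i + 1) := by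
  rcases lt_or_ge (i + 1) n with h | h
  · simpa [map_mul, mkAlgHom_ι] using
      RingQuot.mkAlgHom_rel k (NCARel.braid (k := k) (d := d) ⟨i, by omega⟩ ⟨i + 1, h⟩ rfl)
  · simp [gen_of_le h]

theorem induction_on {motive : GenNilCoxeter k n d → Prop} (a : GenNilCoxeter k n d)
    (algebraMap : ∀ r : k, motive (algebraMap k _ r)) (gen : ∀ m < n, motive (gen m))
    (add : ∀ a b, motive a → motive b → motive (a + b))
    (mul : ∀ a b, motive a → motive b → motive (a * b)) : motive a := by
  obtain ⟨a, rfl⟩ := RingQuot.mkAlgHom_surjective k (NCARel k n d) a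
  induction a using FreeAlgebra.induction with
  | grade0 r => simpa using algebraMap r
  | grade1 i => simpa [mkAlgHom_ι] using gen i.val i.isLt
  | mul a b ha hb => simpa using mul _ _ ha hb
  | add a b ha hb => simpa using add _ _ ha hb

theorem algHom_ext {B : Type*} [Semiring B] [Algebra k B] {f g : GenNilCoxeter k n d →ₐ[k] B}
    (h : ∀ m < n, f (gen m) = g (gen m)) : f = g := by
  ext i
  simpa [mkAlgHom_ι] using h i i.isLt

section lift

variable {B : Type*} [Semiring B] [Algebra k B] (f : ℕ → B)
  (hpow : 0 < n → f 0 ^ d = 0) (hsq : ∀ m, 0 < m → m < n → f m * f m = 0)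
  (hcomm : ∀ i j, i + 1 < j → j < n → f i * f j = f j * f i)
  (hbraid : ∀ i, i + 1 < n → f i * f (i + 1) * f i = f (i + 1) * f i * f (i + 1))

noncomputable def lift : GenNilCoxeter k n d →ₐ[k] B :=
  RingQuot.liftAlgHom k ⟨FreeAlgebra.lift k fun i => f i.val, fun _ _ h => by
    cases h with
    | pow_first i hi => simpa [hi] using hpow (by omega)
    | sq i hi => simpa [sq] using hsq _ hi i.isLt
    | comm i j hij => simpa using hcomm _ _ hij j.isLt
    | braid i j hij => simpa [hij] using hbraid i (by omega)⟩

theorem lift_gen {m : ℕ} (hm : m < n) :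
    lift f hpow hsq hcomm hbraid (gen m : GenNilCoxeter k n d) = f m := by
  simp [lift, gen, hm]

end lift

noncomputable def algEquivOfZero : GenNilCoxeter k 0 d ≃ₐ[k] k :=
  AlgEquiv.ofAlgHom
    (lift (fun _ => 0) (fun h => absurd h (lt_irrefl 0)) (fun _ _ h => absurd h (Nat.not_lt_zero _))
      (fun _ _ _ h => absurd h (Nat.not_lt_zero _)) (fun _ h => absurd h (Nat.not_lt_zero _)))
    (Algebra.ofId k _) (Subsingleton.elim _ _)
    (algHom_ext fun _ hm => absurd hm (Nat.not_lt_zero _))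

theorem commute_gen {i j : ℕ} (hij : i + 1 < j) :
    Commute (gen i : GenNilCoxeter k n d) (gen j) :=
  gen_mul_comm hij

noncomputable def climb : ℕ → GenNilCoxeter k n d
  | 0 => 1
  | m + 1 => gen (m + 1) * climb m

theorem gen_mul_climb_of_add_two_le {m j : ℕ} (h : m + 2 ≤ j) :
    gen j * climb m = (climb m * gen j : GenNilCoxeter k n d) := by
  induction m with
  | zero => simp [climb]
  | succ m ih =>
    rw [climb, ← mul_assoc, ← gen_mul_comm (by omega), mul_assoc, ih (by omega), mul_assoc]

theorem gen_mul_climb_of_lt {g m : ℕ} (hg : 0 < g) (h : g < m) :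
    gen g * climb m = (climb m * gen (g + 1) : GenNilCoxeter k n d) := by
  induction m with
  | zero => omega
  | succ m ih =>
    obtain h | rfl := Nat.lt_succ_iff_lt_or_eq.mp h
    · rw [climb, ← mul_assoc, gen_mul_comm (by omega), mul_assoc, ih h, mul_assoc]
    · obtain ⟨p, rfl⟩ : ∃ p, g = p + 1 := ⟨g - 1, by omega⟩
      calc gen (p + 1) * climb (p + 1 + 1)
          = gen (p + 1) * gen (p + 1 + 1) * gen (p + 1) * climb p := by
            simp only [climb, mul_assoc]
        _ = gen (p + 1 + 1) * gen (p + 1) * (gen (p + 1 + 1) * climb p) := by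
            rw [gen_braid]; simp only [mul_assoc]
        _ = climb (p + 1 + 1) * gen (p + 1 + 1) := by
            rw [gen_mul_climb_of_add_two_le le_rfl]; simp only [climb, mul_assoc]

theorem gen_zero_mul_climb_mul_gen_zero {m : ℕ} (hm : 0 < m) :
    gen 0 * climb m * gen 0 = (climb m * gen 0 * gen 1 : GenNilCoxeter k n d) := by
  induction m with
  | zero => omega
  | succ m ih =>
    obtain rfl | hm := m.eq_zero_or_pos
    · simpa [climb] using gen_braid 0
    · rw [climb, ← mul_assoc, gen_mul_comm (by omega), mul_assoc, mul_assoc,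
        ← mul_assoc _ _ (gen 0), ih hm]
      simp only [mul_assoc]

theorem climb_mul_gen_one {m : ℕ} (hm : 0 < m) : (climb m * gen 1 : GenNilCoxeter k n d) = 0 := by
  induction m with
  | zero => omega
  | succ m ih =>
    obtain rfl | hm := m.eq_zero_or_pos
    · simp [climb, gen_mul_self]
    · rw [climb, mul_assoc, ih hm, mul_zero]

theorem gen_mul_climb_self {m : ℕ} (hm : 0 < m) :
    (gen m * climb m : GenNilCoxeter k n d) = 0 := by
  obtain ⟨m, rfl⟩ := Nat.exists_eq_add_of_lt hm
  rw [climb, ← mul_assoc, gen_mul_self (by omega), zero_mul]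

theorem gen_zero_mul_climb_mul_gen_zero_pow {m a : ℕ} (hm : 0 < m) (ha : 2 ≤ a) :
    gen 0 * (climb m * gen 0 ^ a) = (0 : GenNilCoxeter k n d) := by
  obtain ⟨a, rfl⟩ := Nat.exists_eq_add_of_le' ha
  calc gen 0 * (climb m * gen 0 ^ (a + 2))
      = gen 0 * climb m * gen 0 * gen 0 * gen 0 ^ a := by
        rw [add_comm, pow_add, sq]; simp only [mul_assoc]
    _ = climb m * (gen 0 * gen 1 * gen 0) * gen 0 ^ a := by
        rw [gen_zero_mul_climb_mul_gen_zero hm]; simp only [mul_assoc]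
    _ = 0 := by
        rw [gen_braid]; simp only [← mul_assoc, climb_mul_gen_one hm, zero_mul]

variable (n d) in
abbrev Prefix := Option (Fin (n + 1) × Fin (d + 1))

variable (k n d) in
abbrev PrefixModule := Prefix n d →₀ GenNilCoxeter k n 2

noncomputable def prefixElem : Prefix n d → GenNilCoxeter k (n + 1) (d + 2)
  | none => 1
  | some (κ, α) => climb κ * gen 0 ^ (α.val + 1)

variable (d) in
noncomputable def shiftHom : GenNilCoxeter k n 2 →ₐ[k] GenNilCoxeter k (n + 1) d :=
  lift (fun m => gen (m + 1)) (fun _ => (sq _).trans (gen_mul_self one_pos))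
    (fun _ hm _ => gen_mul_self (by omega)) (fun _ _ hij _ => gen_mul_comm (by omega))
    (fun _ _ => gen_braid _)

theorem shiftHom_gen (m : ℕ) : shiftHom d (gen m : GenNilCoxeter k n 2) = gen (m + 1) := by
  obtain hm | hm := Nat.lt_or_ge m n
  · exact lift_gen _ _ _ _ _ hm
  · rw [gen_of_le hm, gen_of_le (by omega), map_zero]

noncomputable def singleMulLeft (p : Prefix n d) (m : ℕ) :
    GenNilCoxeter k n 2 →ₗ[k] PrefixModule k n d :=
  Finsupp.lsingle p ∘ₗ LinearMap.mulLeft k (gen m)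

/-- Left multiplication by `x_g` on `prefixElem p * b`, read off from the relations. On
`x_κ ⋯ x_1 x_0^(α+1)`: `x_0` raises the power of `x_0` if `κ = 0` (giving `0` at `x_0^(d+2)`);
otherwise it comes out on the right as `x_1` if `α = 0` and gives `0` if `α > 0`. The
generator `x_κ` gives `0`, `x_{κ+1}` prolongs the word, and the others come out on the right
unchanged (`g > κ + 1`) or as `x_{g+1}` (`g < κ`), where they act on `b`. -/
noncomputable def genOpAt (g : ℕ) :
    Prefix n d → GenNilCoxeter k n 2 →ₗ[k] PrefixModule k n d
  | none =>
    if g = 0 then Finsupp.lsingle (some (⟨0, n.succ_pos⟩, ⟨0, d.succ_pos⟩))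
    else singleMulLeft none (g - 1)
  | some (κ, α) =>
    if g = 0 then
      if κ.val = 0 then
        if h : α.val < d then Finsupp.lsingle (some (κ, ⟨α.val + 1, by omega⟩)) else 0
      else if α.val = 0 then singleMulLeft (some (κ, α)) 0 else 0
    else if g = κ.val then 0
    else if g = κ.val + 1 then
      if hg : g < n + 1 then Finsupp.lsingle (some (⟨g, hg⟩, α)) else 0
    else if κ.val + 2 ≤ g then singleMulLeft (some (κ, α)) (g - 1)
    else singleMulLeft (some (κ, α)) g

noncomputable def genOp (g : ℕ) : Module.End k (PrefixModule k n d) :=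
  Finsupp.lsum k (genOpAt g)

section genOp

variable {g κ α : ℕ} {hκ : κ < n + 1} {hα : α < d + 1} (b : GenNilCoxeter k n 2)

theorem genOp_single (g : ℕ) (p : Prefix n d) :
    genOp g (Finsupp.single p b) = genOpAt g p b :=
  Finsupp.lsum_single k _ p b

theorem genOp_none_zero :
    genOp 0 (Finsupp.single (none : Prefix n d) b) =
      Finsupp.single (some (⟨0, n.succ_pos⟩, ⟨0, d.succ_pos⟩)) b := by
  rw [genOp_single, genOpAt, if_pos rfl, Finsupp.lsingle_apply]

theorem genOp_none_pos (hg : 0 < g) :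
    genOp g (Finsupp.single (none : Prefix n d) b) = Finsupp.single none (gen (g - 1) * b) := by
  rw [genOp_single, genOpAt, if_neg hg.ne']
  rfl

theorem genOp_zero_climb (hκ0 : κ = 0) (hαd : α < d) :
    genOp 0 (Finsupp.single (some (⟨κ, hκ⟩, ⟨α, hα⟩) : Prefix n d) b) =
      Finsupp.single (some (⟨κ, hκ⟩, ⟨α + 1, by omega⟩)) b := by
  rw [genOp_single, genOpAt, if_pos rfl, if_pos hκ0, dif_pos hαd, Finsupp.lsingle_apply]

theorem genOp_zero_top (hκ0 : κ = 0) (hαd : d ≤ α) :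
    genOp 0 (Finsupp.single (some (⟨κ, hκ⟩, ⟨α, hα⟩) : Prefix n d) b) = 0 := by
  rw [genOp_single, genOpAt, if_pos rfl, if_pos hκ0, dif_neg (by simp; omega),
    LinearMap.zero_apply]

theorem genOp_zero_pass (hκ0 : κ ≠ 0) (hα0 : α = 0) :
    genOp 0 (Finsupp.single (some (⟨κ, hκ⟩, ⟨α, hα⟩) : Prefix n d) b) =
      Finsupp.single (some (⟨κ, hκ⟩, ⟨α, hα⟩)) (gen 0 * b) := by
  rw [genOp_single, genOpAt, if_pos rfl, if_neg hκ0, if_pos hα0]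
  rfl

theorem genOp_zero_kill (hκ0 : κ ≠ 0) (hα0 : α ≠ 0) :
    genOp 0 (Finsupp.single (some (⟨κ, hκ⟩, ⟨α, hα⟩) : Prefix n d) b) = 0 := by
  rw [genOp_single, genOpAt, if_pos rfl, if_neg hκ0, if_neg hα0, LinearMap.zero_apply]

theorem genOp_self (hg : 0 < g) (hgκ : g = κ) :
    genOp g (Finsupp.single (some (⟨κ, hκ⟩, ⟨α, hα⟩) : Prefix n d) b) = 0 := by
  rw [genOp_single, genOpAt, if_neg hg.ne', if_pos hgκ, LinearMap.zero_apply]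

theorem genOp_succ (hgκ : g = κ + 1) (hg : g < n + 1) :
    genOp g (Finsupp.single (some (⟨κ, hκ⟩, ⟨α, hα⟩) : Prefix n d) b) =
      Finsupp.single (some (⟨g, hg⟩, ⟨α, hα⟩)) b := by
  rw [genOp_single, genOpAt, if_neg (by omega), if_neg (by simp; omega), if_pos hgκ, dif_pos hg,
    Finsupp.lsingle_apply]

theorem genOp_far (hgκ : κ + 2 ≤ g) :
    genOp g (Finsupp.single (some (⟨κ, hκ⟩, ⟨α, hα⟩) : Prefix n d) b) =
      Finsupp.single (some (⟨κ, hκ⟩, ⟨α, hα⟩)) (gen (g - 1) * b) := by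
  rw [genOp_single, genOpAt, if_neg (by omega), if_neg (by simp; omega),
    if_neg (by simp; omega), if_pos hgκ]
  rfl

theorem genOp_below (hg : 0 < g) (hgκ : g < κ) :
    genOp g (Finsupp.single (some (⟨κ, hκ⟩, ⟨α, hα⟩) : Prefix n d) b) =
      Finsupp.single (some (⟨κ, hκ⟩, ⟨α, hα⟩)) (gen g * b) := by
  rw [genOp_single, genOpAt, if_neg (by omega), if_neg (by simp; omega),
    if_neg (by simp; omega), if_neg (by simp; omega)]
  rfl

end genOp

theorem genOp_comm {i j : ℕ} (hij : i + 1 < j) (hj : j < n + 1) :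
    genOp i * genOp j = (genOp j * genOp i : Module.End k (PrefixModule k n d)) := by
  ext p b : 2
  simp only [LinearMap.comp_apply, Finsupp.lsingle_apply, Module.End.mul_apply]
  obtain _ | ⟨⟨κ, hκ⟩, ⟨α, hα⟩⟩ := p
  · obtain _ | i := i
    · simp (disch := omega) only [genOp_none_zero, genOp_none_pos, genOp_far]
    · simp (disch := omega) only [genOp_none_pos, ← mul_assoc]
      rw [gen_mul_comm (by omega)]
  obtain _ | i := i
  · obtain hκ0 | hκ0 := κ.eq_zero_or_pos
    · obtain hαd | hαd := Nat.lt_or_ge α d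
      all_goals simp (disch := omega) only [genOp_zero_climb, genOp_zero_top, genOp_far, map_zero]
    · obtain hj' | hj' | hj' | hj' : j < κ ∨ j = κ ∨ j = κ + 1 ∨ κ + 2 ≤ j := by omega
      all_goals obtain hα0 | hα0 := α.eq_zero_or_pos
      all_goals simp (disch := omega) only [genOp_zero_pass, genOp_zero_kill, genOp_self,
        genOp_succ, genOp_far, genOp_below, map_zero, ← mul_assoc]
      all_goals rw [gen_mul_comm (by omega)]
  · obtain h | h | h | h | h | h | h : j < κ ∨ j = κ ∨ j = κ + 1 ∨
        (i + 1 < κ ∧ κ + 2 ≤ j) ∨ i + 1 = κ ∨ i = κ ∨ κ + 1 ≤ i := by omega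
    all_goals simp (disch := omega) only [genOp_self, genOp_succ, genOp_far, genOp_below,
      map_zero, ← mul_assoc]
    all_goals rw [gen_mul_comm (by omega)]

theorem genOp_braid {i : ℕ} (hi : i + 1 < n + 1) :
    genOp i * genOp (i + 1) * genOp i =
      (genOp (i + 1) * genOp i * genOp (i + 1) :
        Module.End k (PrefixModule k n d)) := by
  ext p b : 2
  simp only [LinearMap.comp_apply, Finsupp.lsingle_apply, Module.End.mul_apply]
  obtain _ | ⟨⟨κ, hκ⟩, ⟨α, hα⟩⟩ := p
  · obtain _ | i := i
    all_goals simp (disch := omega) only [genOp_none_zero, genOp_none_pos, genOp_succ,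
      genOp_zero_pass, Nat.add_sub_cancel, ← mul_assoc, gen_braid]
  obtain _ | i := i
  · obtain hκ' | hκ' | hκ' : κ = 0 ∨ κ = 1 ∨ 2 ≤ κ := by omega
    all_goals obtain hα0 | hα0 := α.eq_zero_or_pos
    all_goals obtain hαd | hαd := Nat.lt_or_ge α d
    all_goals simp (disch := omega) only [genOp_zero_climb, genOp_zero_top, genOp_zero_pass,
      genOp_zero_kill, genOp_self, genOp_succ, genOp_below, map_zero, ← mul_assoc, gen_braid]
  · obtain hi' | hi' | hi' | hi' | hi' :
      i + 2 < κ ∨ i + 2 = κ ∨ i + 1 = κ ∨ i = κ ∨ κ + 1 ≤ i := by omega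
    all_goals simp (disch := omega) only [genOp_self, genOp_succ, genOp_far, genOp_below,
      map_zero, Nat.add_sub_cancel, ← mul_assoc, gen_braid]

theorem genOp_mul_self {g : ℕ} (hg : 0 < g) (hgn : g < n + 1) :
    genOp g * genOp g = (0 : Module.End k (PrefixModule k n d)) := by
  ext p b : 2
  simp only [LinearMap.comp_apply, Finsupp.lsingle_apply, Module.End.mul_apply,
    LinearMap.zero_apply]
  obtain _ | ⟨⟨κ, hκ⟩, ⟨α, hα⟩⟩ := p
  · simp (disch := omega) only [genOp_none_pos, ← mul_assoc, gen_mul_self_of_two, zero_mul,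
      Finsupp.single_zero]
  obtain hg' | hg' | hg' | hg' : g < κ ∨ g = κ ∨ g = κ + 1 ∨ κ + 2 ≤ g := by omega
  all_goals simp (disch := omega) only [genOp_self, genOp_succ, genOp_far, genOp_below, map_zero,
    ← mul_assoc, gen_mul_self_of_two, zero_mul, Finsupp.single_zero]

theorem genOp_zero_pow_single_eq_zero (b : GenNilCoxeter k n 2) (m : ℕ) {α : ℕ}
    (hα : α < d + 1) (hm : d < α + m) :
    (genOp 0 ^ m) (Finsupp.single (some (⟨0, n.succ_pos⟩, ⟨α, hα⟩) : Prefix n d) b) =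
      0 := by
  induction m generalizing α with
  | zero => omega
  | succ m ih =>
    rw [pow_succ, Module.End.mul_apply]
    obtain hαd | hαd := Nat.lt_or_ge α d
    · rw [genOp_zero_climb b rfl hαd, ih _ (by omega)]
    · rw [genOp_zero_top b rfl hαd, map_zero]

theorem genOp_zero_pow : genOp 0 ^ (d + 2) = (0 : Module.End k (PrefixModule k n d)) := by
  ext p b : 2
  simp only [LinearMap.comp_apply, Finsupp.lsingle_apply, LinearMap.zero_apply]
  obtain _ | ⟨⟨κ, hκ⟩, ⟨α, hα⟩⟩ := p
  · rw [pow_succ, Module.End.mul_apply, genOp_none_zero,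
      genOp_zero_pow_single_eq_zero _ _ _ (by omega)]
  obtain rfl | hκ0 := κ.eq_zero_or_pos
  · exact genOp_zero_pow_single_eq_zero _ _ _ (by omega)
  rw [pow_add, Module.End.mul_apply, sq, Module.End.mul_apply]
  obtain rfl | hα0 := α.eq_zero_or_pos
  · rw [genOp_zero_pass _ hκ0.ne' rfl, genOp_zero_pass _ hκ0.ne' rfl, ← mul_assoc,
      gen_mul_self_of_two, zero_mul, Finsupp.single_zero, map_zero]
  · rw [genOp_zero_kill _ hκ0.ne' hα0.ne', map_zero, map_zero]

noncomputable def rep :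
    GenNilCoxeter k (n + 1) (d + 2) →ₐ[k] Module.End k (PrefixModule k n d) :=
  lift genOp (fun _ => genOp_zero_pow) (fun _ hm hmn => genOp_mul_self hm hmn)
    (fun _ _ hij hj => genOp_comm hij hj) (fun _ hi => genOp_braid hi)

theorem rep_gen {m : ℕ} (hm : m < n + 1) :
    rep (gen m : GenNilCoxeter k (n + 1) (d + 2)) = genOp m :=
  lift_gen _ _ _ _ _ hm

noncomputable def prefixSum : PrefixModule k n d →ₗ[k] GenNilCoxeter k (n + 1) (d + 2) :=
  Finsupp.lsum k fun p => LinearMap.mulLeft k (prefixElem p) ∘ₗ (shiftHom (d + 2)).toLinearMap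

theorem prefixSum_single (p : Prefix n d) (b : GenNilCoxeter k n 2) :
    prefixSum (Finsupp.single p b) = prefixElem p * shiftHom (d + 2) b :=
  Finsupp.lsum_single k _ p b

theorem prefixSum_single_gen_mul (p : Prefix n d) (m : ℕ) (b : GenNilCoxeter k n 2) :
    prefixSum (Finsupp.single p (gen m * b)) =
      prefixElem p * gen (m + 1) * shiftHom (d + 2) b := by
  rw [prefixSum_single, map_mul, shiftHom_gen, mul_assoc]

theorem gen_mul_prefixSum_single {g : ℕ} (hg : g < n + 1) (p : Prefix n d)
    (b : GenNilCoxeter k n 2) :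
    gen g * prefixSum (Finsupp.single p b) = prefixSum (genOp g (Finsupp.single p b)) := by
  obtain _ | ⟨⟨κ, hκ⟩, ⟨α, hα⟩⟩ := p
  · obtain _ | g := g
    · simp [genOp_none_zero, prefixSum_single, prefixElem, climb]
    · rw [genOp_none_pos _ (by omega), prefixSum_single, prefixSum_single_gen_mul,
        Nat.sub_add_cancel (by omega)]
      simp [prefixElem]
  simp only [prefixSum_single, prefixElem, ← mul_assoc]
  obtain rfl | hg0 := g.eq_zero_or_pos
  · obtain rfl | hκ0 := κ.eq_zero_or_pos
    · obtain hαd | hαd := Nat.lt_or_ge α d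
      · rw [genOp_zero_climb _ rfl hαd, prefixSum_single]
        simp only [prefixElem, climb, mul_one, one_mul, ← pow_succ']
      · rw [genOp_zero_top _ rfl hαd, map_zero, show α = d by omega]
        simp [climb, ← pow_succ', gen_zero_pow]
    obtain rfl | hα0 := α.eq_zero_or_pos
    · rw [genOp_zero_pass _ hκ0.ne' rfl, prefixSum_single_gen_mul]
      simp [prefixElem, gen_zero_mul_climb_mul_gen_zero hκ0]
    · rw [genOp_zero_kill _ hκ0.ne' hα0.ne', map_zero, mul_assoc (gen 0),
        gen_zero_mul_climb_mul_gen_zero_pow hκ0 (by omega), zero_mul]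
  obtain h | h | h | h : g < κ ∨ g = κ ∨ g = κ + 1 ∨ κ + 2 ≤ g := by omega
  · rw [genOp_below _ hg0 h, prefixSum_single_gen_mul, prefixElem, gen_mul_climb_of_lt hg0 h,
      mul_assoc (climb κ), ← ((commute_gen (i := 0) (j := g + 1) (by omega)).pow_left _).eq]
    simp only [mul_assoc]
  · subst h
    rw [genOp_self _ hg0 rfl, map_zero, gen_mul_climb_self hg0, zero_mul, zero_mul]
  · subst h
    rw [genOp_succ _ rfl hg, prefixSum_single]
    rfl
  · rw [genOp_far _ h, prefixSum_single_gen_mul, prefixElem, gen_mul_climb_of_add_two_le h,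
      mul_assoc (climb κ), ← ((commute_gen (i := 0) (j := g) (by omega)).pow_left _).eq,
      Nat.sub_add_cancel (by omega)]
    simp only [mul_assoc]

theorem prefixSum_rep (a : GenNilCoxeter k (n + 1) (d + 2)) (v : PrefixModule k n d) :
    prefixSum (rep a v) = a * prefixSum v := by
  induction a using induction_on generalizing v with
  | algebraMap r => simp [Algebra.smul_def]
  | gen m hm =>
    induction v using Finsupp.induction_linear with
    | zero => simp
    | add v w hv hw => simp only [map_add, hv, hw, mul_add]
    | single p b => rw [rep_gen hm, gen_mul_prefixSum_single hm]
  | add a a' ha ha' => rw [map_add, LinearMap.add_apply, map_add, ha, ha', add_mul]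
  | mul a a' ha ha' => rw [map_mul, Module.End.mul_apply, ha, ha', mul_assoc]

theorem rep_shiftHom_single_none (b c : GenNilCoxeter k n 2) :
    rep (shiftHom (d + 2) b) (Finsupp.single (none : Prefix n d) c) =
      Finsupp.single none (b * c) := by
  induction b using induction_on generalizing c with
  | algebraMap r => simp [Algebra.smul_def]
  | gen m hm =>
    rw [shiftHom_gen, rep_gen (by omega), genOp_none_pos _ (by omega : 0 < m + 1),
      Nat.add_sub_cancel]
  | add b b' hb hb' =>
    rw [map_add, map_add, LinearMap.add_apply, hb, hb', add_mul, Finsupp.single_add]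
  | mul b b' hb hb' => rw [map_mul, map_mul, Module.End.mul_apply, hb', hb, mul_assoc]

theorem rep_gen_zero_pow_single_none (b : GenNilCoxeter k n 2) {α : ℕ} (hα : α < d + 1) :
    rep (gen 0 ^ (α + 1)) (Finsupp.single (none : Prefix n d) b) =
      Finsupp.single (some (⟨0, n.succ_pos⟩, ⟨α, hα⟩)) b := by
  induction α with
  | zero => rw [zero_add, pow_one, rep_gen n.succ_pos, genOp_none_zero]
  | succ α ih =>
    rw [pow_succ', map_mul, Module.End.mul_apply, ih (by omega), rep_gen n.succ_pos,
      genOp_zero_climb _ rfl (by omega)]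

theorem rep_climb_single (b : GenNilCoxeter k n 2) {κ α : ℕ} (hκ : κ < n + 1)
    (hα : α < d + 1) :
    rep (climb κ) (Finsupp.single (some (⟨0, n.succ_pos⟩, ⟨α, hα⟩) : Prefix n d) b) =
      Finsupp.single (some (⟨κ, hκ⟩, ⟨α, hα⟩)) b := by
  induction κ with
  | zero => simp [climb]
  | succ κ ih =>
    rw [climb, map_mul, Module.End.mul_apply, ih (by omega), rep_gen hκ, genOp_succ _ rfl hκ]

theorem rep_prefixElem_single_none (p : Prefix n d) (b : GenNilCoxeter k n 2) :
    rep (prefixElem p) (Finsupp.single none b) = Finsupp.single p b := by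
  obtain _ | ⟨⟨κ, hκ⟩, ⟨α, hα⟩⟩ := p
  · simp [prefixElem]
  · rw [prefixElem, map_mul, Module.End.mul_apply, rep_gen_zero_pow_single_none,
      rep_climb_single]

noncomputable def linearEquivFinsupp :
    GenNilCoxeter k (n + 1) (d + 2) ≃ₗ[k] PrefixModule k n d where
  toFun a := rep a (Finsupp.single none 1)
  map_add' a a' := by simp
  map_smul' r a := by simp
  invFun := prefixSum
  left_inv a := by simp [prefixSum_rep, prefixSum_single, prefixElem]
  right_inv v := by
    induction v using Finsupp.induction_linear with
    | zero => simp
    | add v w hv hw => simp only [map_add, LinearMap.add_apply] at hv hw ⊢; rw [hv, hw]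
    | single p b =>
      change rep (prefixSum _) _ = _
      rw [prefixSum_single, map_mul, Module.End.mul_apply, rep_shiftHom_single_none, mul_one,
        rep_prefixElem_single_none]

end GenNilCoxeter

theorem stmt_11_general (k : Type*) [CommRing k] (n d : ℕ) (hd : 2 ≤ d) :
    Nonempty (Module.Basis (Fin (n.factorial * (1 + n * (d - 1)))) k (RingQuot (NCARel k n d))) := by
  induction n generalizing d with
  | zero =>
    exact ⟨((Module.Basis.singleton (Fin 1) k).map
      GenNilCoxeter.algEquivOfZero.symm.toLinearEquiv).reindex (finCongr (by simp))⟩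
  | succ n ih =>
    obtain ⟨d, rfl⟩ := Nat.exists_eq_add_of_le' hd
    obtain ⟨b⟩ := ih 2 le_rfl
    refine ⟨((Finsupp.basis fun _ => b).map GenNilCoxeter.linearEquivFinsupp.symm).reindex
      (Fintype.equivFinOfCardEq ?_)⟩
    simp only [Nat.add_one_sub_one, mul_one, Fintype.card_sigma, Fintype.card_fin,
      Finset.sum_const, Finset.card_univ, Fintype.card_option, Fintype.card_prod, smul_eq_mul,
      Nat.factorial_succ]
    ring

/-- For `n ≥ 1` and `d ≥ 2`, the generalized nil-Coxeter algebra `NC_A(n, d)` of type `A_n`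
with exponents `(d, 2, …, 2)` is a free `k`-module of rank `n! · (1 + n(d-1))`. -/
theorem stmt_11 (k : Type*) [CommRing k] [Nontrivial k] (n d : ℕ) (hn : 1 ≤ n) (hd : 2 ≤ d) :
    Nonempty (Module.Basis (Fin (n.factorial * (1 + n * (d - 1)))) k (RingQuot (NCARel k n d))) :=
  stmt_11_general k n d hd
end
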